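/- Let H be a ℤ-graded Hopf algebra over a field k satisfying the twisting conditions, and let (τ, μ) be a twisting pair of H. Then the family {τ_i∘μ_i}_{i∈ℤ} is a twisting system of H. -/

import Mathlib

/-!
Condition (P1) says that `τ_i` acts on the right tensor factor of `Δ` and `μ_j` on the left one,
so `Δ ∘ τ_i ∘ μ_j = (μ_j ⊗ τ_i) ∘ Δ = Δ ∘ μ_j ∘ τ_i`; since `Δ` is injective (it has the left
inverse `ε ⊗ id`), `τ_i` and `μ_j` commute. The composite of two mutually commuting twisting
systems is again a twisting system.
-/

open TensorProduct

/-- A twisting system of a ℤ-graded algebra. -/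
def IsTwistingSystem {k A : Type*} [CommSemiring k] [Semiring A] [Algebra k A]
    (𝒜 : ℤ → Submodule k A) (τ : ℤ → (A →ₗ[k] A)) : Prop :=
  (∀ i : ℤ, Function.Bijective (τ i)) ∧
  (∀ (i n : ℤ), ∀ a ∈ 𝒜 n, τ i a ∈ 𝒜 n) ∧
  (τ 0 = LinearMap.id) ∧
  (∀ i : ℤ, τ i 1 = 1) ∧
  (∀ (i j : ℤ), ∀ a ∈ 𝒜 j, ∀ b : A, τ i (a * τ j b) = τ i a * τ (i + j) b)

namespace Coalgebra

variable {R A : Type*} [CommSemiring R] [AddCommMonoid A] [Module R A] [Coalgebra R A]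

theorem comul_injective : Function.Injective (comul (R := R) (A := A)) := by
  intro a b hab
  simpa [rTensor_counit_comul] using
    congrArg (fun x => TensorProduct.lid R A (counit.rTensor A x)) hab

theorem comp_comm_of_comul_comp {f g : A →ₗ[R] A}
    (hf : comul ∘ₗ f = map f LinearMap.id ∘ₗ comul)
    (hg : comul ∘ₗ g = map LinearMap.id g ∘ₗ comul) :
    g ∘ₗ f = f ∘ₗ g := by
  have hgf : comul ∘ₗ (g ∘ₗ f) = map f g ∘ₗ comul := by
    rw [← LinearMap.comp_assoc, hg, LinearMap.comp_assoc, hf, ← LinearMap.comp_assoc,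
      ← map_comp, LinearMap.id_comp, LinearMap.comp_id]
  have hfg : comul ∘ₗ (f ∘ₗ g) = map f g ∘ₗ comul := by
    rw [← LinearMap.comp_assoc, hf, LinearMap.comp_assoc, hg, ← LinearMap.comp_assoc,
      ← map_comp, LinearMap.id_comp, LinearMap.comp_id]
  ext x
  exact comul_injective (R := R) (by simpa using congrArg (· x) (hgf.trans hfg.symm))

end Coalgebra

theorem IsTwistingSystem.comp {k A : Type*} [CommSemiring k] [Semiring A] [Algebra k A]
    {𝒜 : ℤ → Submodule k A} {τ μ : ℤ → (A →ₗ[k] A)}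
    (hτ : IsTwistingSystem 𝒜 τ) (hμ : IsTwistingSystem 𝒜 μ)
    (hcomm : ∀ i j, τ i ∘ₗ μ j = μ j ∘ₗ τ i) :
    IsTwistingSystem 𝒜 (fun i => τ i ∘ₗ μ i) := by
  obtain ⟨hτ_bij, hτ_deg, hτ_zero, hτ_one, hτ_mul⟩ := hτ
  obtain ⟨hμ_bij, hμ_deg, hμ_zero, hμ_one, hμ_mul⟩ := hμ
  have comm (i j : ℤ) (x : A) : τ i (μ j x) = μ j (τ i x) :=
    LinearMap.congr_fun (hcomm i j) x
  refine ⟨fun i => (hτ_bij i).comp (hμ_bij i), fun i n a ha => hτ_deg i n _ (hμ_deg i n a ha),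
    by simp [hτ_zero, hμ_zero], fun i => by simp [hμ_one, hτ_one], ?_⟩
  intro i j a ha b
  calc τ i (μ i (a * τ j (μ j b)))
      = τ i (μ i a * τ j (μ (i + j) b)) := by
        rw [comm j j, hμ_mul i j a ha, comm j (i + j)]
    _ = τ i (μ i a) * τ (i + j) (μ (i + j) b) := hτ_mul i j _ (hμ_deg i j a ha) _

theorem statement11 {k H : Type*} [Field k] [Ring H] [HopfAlgebra k H]
    (𝒜 : ℤ → Submodule k H)
    (τ μ : ℤ → (H →ₗ[k] H))
    (hτ : IsTwistingSystem 𝒜 τ) (hμ : IsTwistingSystem 𝒜 μ)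
    (hP1τ : ∀ i : ℤ, Coalgebra.comul (R := k) ∘ₗ τ i =
      TensorProduct.map LinearMap.id (τ i) ∘ₗ Coalgebra.comul)
    (hP1μ : ∀ i : ℤ, Coalgebra.comul (R := k) ∘ₗ μ i =
      TensorProduct.map (μ i) LinearMap.id ∘ₗ Coalgebra.comul) :
    IsTwistingSystem 𝒜 (fun i => τ i ∘ₗ μ i) :=
  hτ.comp hμ fun i j => Coalgebra.comp_comm_of_comul_comp (hP1μ j) (hP1τ i)
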